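/- arXiv:1912.02135 — 4 statements merged into one kernel-verified Lean document; each statement's English description precedes it below -/
import Mathlib

section
/- Let (r_n) be a nonnegative real sequence satisfying r_{n+1} ≤ r_n - C·r_n^{(1-θ)/θ} for all n, where 0 < C < 1 and θ ∈ (0, 1/2). Then r_n ≤ s_0·n^{-θ/(1-2θ)} for all n ≥ 1, where s_0 = max{r_0, (C·(1-2θ)/θ)^{-θ/(1-2θ)}} with γ = θ/(1-2θ). -/
open Real

theorem stmt_0 (r : ℕ → ℝ) (C θ : ℝ) (hC0 : 0 < C) (hC1 : C < 1)
    (hθ0 : 0 < θ) (hθ2 : θ < 1 / 2)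
    (hrpos : ∀ n, 0 ≤ r n)
    (hrec : ∀ n, r (n + 1) ≤ r n - C * r n ^ ((1 - θ) / θ)) :
    ∀ n : ℕ, 1 ≤ n →
      r n ≤ max (r 0) ((C * (1 - 2 * θ) / θ) ^ (-(θ / (1 - 2 * θ)))) *
        (n : ℝ) ^ (-(θ / (1 - 2 * θ))) := by
  intro n hn
  set γ := θ / (1 - 2 * θ) with hγdef
  set β := (1 - 2 * θ) / θ with hβdef
  have h2θ : 0 < 1 - 2 * θ := by linarith
  have hβ : 0 < β := div_pos h2θ hθ0
  have hγ : 0 < γ := div_pos hθ0 h2θ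
  have hβγ : β * γ = 1 := by
    rw [hβdef, hγdef]; field_simp
  have hexp : (1 - θ) / θ = 1 + β := by
    rw [hβdef]; field_simp; ring
  have hmono : ∀ k, r (k + 1) ≤ r k := by
    intro k
    have h1 := hrec k
    have h2 : 0 ≤ C * r k ^ ((1 - θ) / θ) :=
      mul_nonneg hC0.le (rpow_nonneg (hrpos k) _)
    linarith
  by_cases hrn : r n = 0
  · rw [hrn]
    exact mul_nonneg ((hrpos 0).trans (le_max_left _ _))
      (rpow_nonneg (Nat.cast_nonneg n) _)
  · have hrnpos : 0 < r n := (hrpos n).lt_of_ne' hrn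
    have hanti : ∀ k m, k ≤ m → r m ≤ r k := by
      intro k m hkm
      induction m with
      | zero => simp_all
      | succ m ih =>
        rcases Nat.lt_or_ge k (m + 1) with h | h
        · exact (hmono m).trans (ih (Nat.lt_succ_iff.mp h))
        · have : k = m + 1 := le_antisymm hkm h
          simp [this]
    have hpos : ∀ k ≤ n, 0 < r k := fun k hk => hrnpos.trans_le (hanti k n hk)
    -- key step
    have step : ∀ k, 0 < r (k + 1) → r k ^ (-β) + β * C ≤ r (k + 1) ^ (-β) := by
      intro k hb
      have ha : 0 < r k := hb.trans_le (hmono k)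
      set a := r k with hadef
      set b := r (k + 1) with hbdef
      set t := C * a ^ β with htdef
      have htpos : 0 < t := mul_pos hC0 (rpow_pos_of_pos ha β)
      have haβ : a ^ (1 + β) = a * a ^ β := by
        rw [rpow_add ha, rpow_one]
      have hble : b ≤ a * (1 - t) := by
        have h1 := hrec k
        rw [hexp, haβ] at h1
        rw [htdef]; nlinarith
      have ht1 : t < 1 := by nlinarith
      have h1mt : 0 < 1 - t := by linarith
      have h1 : (a * (1 - t)) ^ (-β) ≤ b ^ (-β) :=
        rpow_le_rpow_of_nonpos hb hble (neg_nonpos.mpr hβ.le)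
      have h2 : (a * (1 - t)) ^ (-β) = a ^ (-β) * (1 - t) ^ (-β) :=
        mul_rpow ha.le h1mt.le
      -- Bernoulli-type: 1 + β * t ≤ (1 - t) ^ (-β)
      have h3 : 1 + β * t ≤ (1 - t) ^ (-β) := by
        have hlog : Real.log (1 - t) ≤ -t := by
          have := Real.log_le_sub_one_of_pos h1mt
          linarith
        have hrw : (1 - t) ^ (-β) = Real.exp (-β * Real.log (1 - t)) := by
          rw [rpow_def_of_pos h1mt]; ring_nf
        rw [hrw]
        have h4 : β * t ≤ -β * Real.log (1 - t) := by nlinarith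
        have h5 : 1 + β * t ≤ Real.exp (β * t) := by
          have := Real.add_one_le_exp (β * t); linarith
        exact h5.trans (Real.exp_le_exp.mpr h4)
      have h6 : a ^ (-β) * (1 + β * t) = a ^ (-β) + β * C := by
        have : a ^ (-β) * a ^ β = 1 := by
          rw [← rpow_add ha]; simp
        rw [htdef]
        have h' : a ^ (-β) * (1 + β * (C * a ^ β)) =
            a ^ (-β) + β * C * (a ^ (-β) * a ^ β) := by ring
        rw [h', this, mul_one]
      have h7 : 0 ≤ a ^ (-β) := (rpow_pos_of_pos ha _).le
      calc a ^ (-β) + β * C = a ^ (-β) * (1 + β * t) := h6.symm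
        _ ≤ a ^ (-β) * (1 - t) ^ (-β) := by nlinarith
        _ = (a * (1 - t)) ^ (-β) := h2.symm
        _ ≤ b ^ (-β) := h1
    -- telescoping
    have tele : ∀ k ≤ n, r 0 ^ (-β) + k * (β * C) ≤ r k ^ (-β) := by
      intro k hk
      induction k with
      | zero => simp
      | succ k ih =>
        have hk' : k ≤ n := Nat.le_of_succ_le hk
        have := step k (hpos (k + 1) hk)
        have ih' := ih hk'
        push_cast
        push_cast at ih'
        linarith
    have key := tele n le_rfl
    have hr0 : 0 < r 0 ^ (-β) := rpow_pos_of_pos (hpos 0 (Nat.zero_le n)) _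
    have hn1 : (1 : ℝ) ≤ (n : ℝ) := by exact_mod_cast hn
    have hnβC : 0 < (n : ℝ) * (β * C) := by positivity
    have h5 : (n : ℝ) * (β * C) ≤ r n ^ (-β) := by linarith
    have hrw : r n = (r n ^ (-β)) ^ (-γ) := by
      have hmul : -β * -γ = 1 := by rw [neg_mul_neg, hβγ]
      rw [← Real.rpow_mul hrnpos.le, hmul, rpow_one]
    have h8 : r n ≤ ((n : ℝ) * (β * C)) ^ (-γ) := by
      calc r n = (r n ^ (-β)) ^ (-γ) := hrw
        _ ≤ ((n : ℝ) * (β * C)) ^ (-γ) :=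
          rpow_le_rpow_of_nonpos hnβC h5 (neg_nonpos.mpr hγ.le)
    have h9 : ((n : ℝ) * (β * C)) ^ (-γ) = (β * C) ^ (-γ) * (n : ℝ) ^ (-γ) := by
      rw [mul_comm (n : ℝ) (β * C), mul_rpow (by positivity) (Nat.cast_nonneg n)]
    have h10 : (β * C) ^ (-γ) = (C * (1 - 2 * θ) / θ) ^ (-γ) := by
      congr 1
      rw [hβdef]; ring
    have h11 : (β * C) ^ (-γ) ≤ max (r 0) ((C * (1 - 2 * θ) / θ) ^ (-γ)) := by
      rw [h10]; exact le_max_right _ _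
    calc r n ≤ (β * C) ^ (-γ) * (n : ℝ) ^ (-γ) := by rw [← h9]; exact h8
      _ ≤ max (r 0) ((C * (1 - 2 * θ) / θ) ^ (-γ)) * (n : ℝ) ^ (-γ) := by
        exact mul_le_mul_of_nonneg_right h11 (rpow_nonneg (Nat.cast_nonneg n) _)
end

section
/- Let A be a symmetric positive definite operator on a Hilbert space with smallest eigenvalue μ₁ (eigenfunction w₁, ‖w₁‖ = 1) and spectral gap μ₂ > μ₁. Let u be a unit vector with ‖u - w₁‖_{L²} ≤ s < 1, and let G = A^{-1}. Then for any constant C_L ≥ 1 + μ₂/((μ₂ - μ₁)(1 - s²)), one has (u,u)_A - (w₁,w₁)_A ≤ C_L·((u,u)_A - 1/(u, G u)_{L²}). -/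
open Matrix

private lemma cs_aux {N : ℕ} (B : Matrix (Fin N) (Fin N) ℝ)
    (hsy : ∀ x y : Fin N → ℝ, x ⬝ᵥ B.mulVec y = y ⬝ᵥ B.mulVec x)
    (hpos : ∀ z : Fin N → ℝ, 0 ≤ z ⬝ᵥ B.mulVec z) (x y : Fin N → ℝ) :
    (x ⬝ᵥ B.mulVec y) ^ 2 ≤ (x ⬝ᵥ B.mulVec x) * (y ⬝ᵥ B.mulVec y) := by
  have key : ∀ t : ℝ, 0 ≤ (y ⬝ᵥ B.mulVec y) * (t * t) + (2 * (x ⬝ᵥ B.mulVec y)) * t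
      + (x ⬝ᵥ B.mulVec x) := by
    intro t
    have h := hpos (x + t • y)
    have hxy := hsy x y
    simp only [mulVec_add, mulVec_smul, add_dotProduct, smul_dotProduct, dotProduct_add,
      dotProduct_smul, smul_eq_mul] at h
    rw [hxy] at h; rw [hxy]
    nlinarith [h]
  have hd := discrim_le_zero key
  rw [discrim] at hd
  nlinarith [hd]

set_option maxHeartbeats 1000000 in
/-- Łojasiewicz inequality with exponent 1/2 for the Rayleigh quotient of a
symmetric positive definite matrix `A` with simple lowest eigenvalue `μ₁`
(unit eigenvector `w₁`) and spectral gap `μ₂ > μ₁`. -/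
theorem stmt_7 {N : ℕ} (A : Matrix (Fin N) (Fin N) ℝ)
    (hA_symm : A.IsSymm) (hA_pd : A.PosDef)
    (μ₁ μ₂ : ℝ) (w₁ : Fin N → ℝ) (u : Fin N → ℝ) (s CL : ℝ)
    (hw₁ : A.mulVec w₁ = μ₁ • w₁) (hw₁_unit : w₁ ⬝ᵥ w₁ = 1)
    (hμ₁_min : ∀ z : Fin N → ℝ, μ₁ * (z ⬝ᵥ z) ≤ z ⬝ᵥ A.mulVec z)
    (hμ₂_gap : ∀ z : Fin N → ℝ, z ⬝ᵥ w₁ = 0 → μ₂ * (z ⬝ᵥ z) ≤ z ⬝ᵥ A.mulVec z)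
    (hμ : μ₁ < μ₂)
    (hu_unit : u ⬝ᵥ u = 1)
    (hs0 : 0 ≤ s) (hs1 : s < 1)
    (hclose : (u - w₁) ⬝ᵥ (u - w₁) ≤ s ^ 2)
    (hCL : CL ≥ 1 + μ₂ / ((μ₂ - μ₁) * (1 - s ^ 2))) :
    u ⬝ᵥ A.mulVec u - w₁ ⬝ᵥ A.mulVec w₁ ≤
      CL * (u ⬝ᵥ A.mulVec u - 1 / (u ⬝ᵥ A⁻¹.mulVec u)) := by
  classical
  -- basic matrix facts
  have hdet : IsUnit A.det := isUnit_iff_ne_zero.mpr (ne_of_gt hA_pd.det_pos)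
  have hAG : ∀ x : Fin N → ℝ, A.mulVec (A⁻¹.mulVec x) = x := by
    intro x
    rw [Matrix.mulVec_mulVec, Matrix.mul_nonsing_inv A hdet, Matrix.one_mulVec]
  have hGA : ∀ x : Fin N → ℝ, A⁻¹.mulVec (A.mulVec x) = x := by
    intro x
    rw [Matrix.mulVec_mulVec, Matrix.nonsing_inv_mul A hdet, Matrix.one_mulVec]
  have hAsy : ∀ x y : Fin N → ℝ, x ⬝ᵥ A.mulVec y = y ⬝ᵥ A.mulVec x := by
    intro x y
    rw [Matrix.dotProduct_mulVec, ← Matrix.mulVec_transpose, hA_symm.eq, dotProduct_comm]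
  have hG_symm : A⁻¹.IsSymm := by
    rw [Matrix.IsSymm, Matrix.transpose_nonsing_inv, hA_symm.eq]
  have hGsy : ∀ x y : Fin N → ℝ, x ⬝ᵥ A⁻¹.mulVec y = y ⬝ᵥ A⁻¹.mulVec x := by
    intro x y
    rw [Matrix.dotProduct_mulVec, ← Matrix.mulVec_transpose, hG_symm.eq, dotProduct_comm]
  have hApos : ∀ z : Fin N → ℝ, 0 ≤ z ⬝ᵥ A.mulVec z := fun z =>
    by simpa using hA_pd.posSemidef.dotProduct_mulVec_nonneg z
  have hG_pd : (A⁻¹).PosDef := hA_pd.inv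
  have hGpos : ∀ z : Fin N → ℝ, 0 ≤ z ⬝ᵥ A⁻¹.mulVec z := fun z => by simpa using hG_pd.posSemidef.dotProduct_mulVec_nonneg z
  -- μ₁ positivity
  have hw₁A : w₁ ⬝ᵥ A.mulVec w₁ = μ₁ := by
    rw [hw₁, dotProduct_smul, smul_eq_mul, hw₁_unit, mul_one]
  have hw₁ne : w₁ ≠ 0 := by
    intro h
    rw [h] at hw₁_unit
    simp at hw₁_unit
  have hμ₁pos : 0 < μ₁ := by
    have := hA_pd.dotProduct_mulVec_pos hw₁ne
    rwa [star_trivial, hw₁A] at this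
  have hμ₂pos : 0 < μ₂ := lt_trans hμ₁pos hμ
  -- decomposition
  set α : ℝ := u ⬝ᵥ w₁ with hα_def
  set v : Fin N → ℝ := u - α • w₁ with hv_def
  have hu_eq : u = v + α • w₁ := by rw [hv_def]; ring_nf
  have hvw : v ⬝ᵥ w₁ = 0 := by
    rw [hv_def]
    simp [sub_dotProduct, smul_dotProduct, hw₁_unit, hα_def]
  have hw₁v : w₁ ⬝ᵥ v = 0 := by rw [dotProduct_comm]; exact hvw
  set m : ℝ := v ⬝ᵥ v with hm_def
  set q : ℝ := v ⬝ᵥ A.mulVec v with hq_def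
  set p : ℝ := v ⬝ᵥ A⁻¹.mulVec v with hp_def
  set a : ℝ := u ⬝ᵥ A.mulVec u with ha_def
  set g : ℝ := u ⬝ᵥ A⁻¹.mulVec u with hg_def
  have hGw₁ : A⁻¹.mulVec w₁ = μ₁⁻¹ • w₁ := by
    have h1 : A⁻¹.mulVec (A.mulVec w₁) = w₁ := hGA w₁
    rw [hw₁, Matrix.mulVec_smul] at h1
    have h2 : A⁻¹.mulVec w₁ = μ₁⁻¹ • (μ₁ • A⁻¹.mulVec w₁) := by
      rw [smul_smul, inv_mul_cancel₀ (ne_of_gt hμ₁pos), one_smul]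
    rw [h2, h1]
  have hvAw : v ⬝ᵥ A.mulVec w₁ = 0 := by
    rw [hw₁, dotProduct_smul, smul_eq_mul, hvw, mul_zero]
  have hwAv : w₁ ⬝ᵥ A.mulVec v = 0 := by rw [hAsy]; exact hvAw
  have hvGw : v ⬝ᵥ A⁻¹.mulVec w₁ = 0 := by
    rw [hGw₁, dotProduct_smul, smul_eq_mul, hvw, mul_zero]
  have hwGv : w₁ ⬝ᵥ A⁻¹.mulVec v = 0 := by rw [hGsy]; exact hvGw
  -- F1 : α² + m = 1
  have hF1 : α ^ 2 + m = 1 := by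
    have : u ⬝ᵥ u = m + α ^ 2 := by
      conv_lhs => rw [hu_eq]
      simp only [add_dotProduct, dotProduct_add, smul_dotProduct, dotProduct_smul, smul_eq_mul,
        hvw, hw₁v, hw₁_unit, hm_def]
      ring
    rw [hu_unit] at this
    linarith
  -- F2 : a = μ₁ α² + q
  have hF2 : a = μ₁ * α ^ 2 + q := by
    rw [ha_def]
    conv_lhs => rw [hu_eq]
    simp only [Matrix.mulVec_add, Matrix.mulVec_smul, add_dotProduct, dotProduct_add,
      smul_dotProduct, dotProduct_smul, smul_eq_mul, hvAw, hwAv, hw₁A, hq_def]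
    ring
  -- F3 : g = α²/μ₁ + p
  have hF3 : g = α ^ 2 / μ₁ + p := by
    rw [hg_def]
    conv_lhs => rw [hu_eq]
    simp only [Matrix.mulVec_add, Matrix.mulVec_smul, add_dotProduct, dotProduct_add,
      smul_dotProduct, dotProduct_smul, smul_eq_mul, hvGw, hwGv, hp_def]
    have : w₁ ⬝ᵥ A⁻¹.mulVec w₁ = μ₁⁻¹ := by
      rw [hGw₁, dotProduct_smul, smul_eq_mul, hw₁_unit, mul_one]
    rw [this]
    field_simp
    ring
  -- F4 : m² ≤ q p
  have hF4 : m ^ 2 ≤ q * p := by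
    have h := cs_aux A hAsy hApos v (A⁻¹.mulVec v)
    rw [hAG v] at h
    rw [dotProduct_comm (A⁻¹.mulVec v) v] at h
    exact h
  -- F5 : μ₂ m ≤ q
  have hF5 : μ₂ * m ≤ q := hμ₂_gap v hvw
  -- F6 : μ₂ p ≤ m  (p ≤ m/μ₂)
  have hF6 : μ₂ * p ≤ m := by
    set z : Fin N → ℝ := A⁻¹.mulVec v with hz_def
    have hzw : z ⬝ᵥ w₁ = 0 := by rw [dotProduct_comm]; exact hwGv
    have h1 := hμ₂_gap z hzw
    have hzAz : z ⬝ᵥ A.mulVec z = p := by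
      rw [hz_def, hAG v, dotProduct_comm]
    rw [hzAz] at h1
    have hcse : (v ⬝ᵥ z) ^ 2 ≤ (v ⬝ᵥ v) * (z ⬝ᵥ z) := by
      have h := cs_aux (1 : Matrix (Fin N) (Fin N) ℝ)
        (fun x y => by rw [Matrix.one_mulVec, Matrix.one_mulVec, dotProduct_comm])
        (fun x => by rw [Matrix.one_mulVec]; simpa using dotProduct_star_self_nonneg x)
        v z
      simpa [Matrix.one_mulVec] using h
    have hvz : v ⬝ᵥ z = p := by rw [hz_def]
    rw [hvz, ← hm_def] at hcse
    have hz0 : 0 ≤ z ⬝ᵥ z := by simpa using dotProduct_star_self_nonneg z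
    have hp0' : 0 ≤ p := hGpos v
    clear_value z
    have hm0' : 0 ≤ m := by simpa [hm_def] using dotProduct_star_self_nonneg v
    have e1 : μ₂ * p ^ 2 ≤ μ₂ * (m * (z ⬝ᵥ z)) :=
      mul_le_mul_of_nonneg_left hcse hμ₂pos.le
    have e3 : m * (μ₂ * (z ⬝ᵥ z)) ≤ m * p := mul_le_mul_of_nonneg_left h1 hm0'
    have e2 : μ₂ * (m * (z ⬝ᵥ z)) = m * (μ₂ * (z ⬝ᵥ z)) := by ring
    have e4 : μ₂ * p ^ 2 ≤ m * p := by linarith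
    rcases eq_or_lt_of_le hp0' with hp|hp
    · rw [← hp, mul_zero]; exact hm0'
    · by_contra hc
      push_neg at hc
      have e5 : 0 < (μ₂ * p - m) * p := mul_pos (by linarith) hp
      have e6 : (μ₂ * p - m) * p = μ₂ * p ^ 2 - m * p := by ring
      linarith
  -- F8 : m ≤ s²
  have hF8 : m ≤ s ^ 2 := by
    have hexp : (u - w₁) ⬝ᵥ (u - w₁) = 2 - 2 * α := by
      have hwu : w₁ ⬝ᵥ u = α := by rw [dotProduct_comm]
      simp only [sub_dotProduct, dotProduct_sub, hu_unit, hw₁_unit, hwu, ← hα_def]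
      ring
    rw [hexp] at hclose
    have hm_eq : m = 1 - α ^ 2 := by linarith [hF1]
    have hsq : (1 - α) ^ 2 = 1 - 2 * α + α ^ 2 := by ring
    linarith [sq_nonneg (1 - α)]
  -- nonneg facts
  have hm0 : 0 ≤ m := by simpa using dotProduct_star_self_nonneg v
  have hq0 : 0 ≤ q := hApos v
  have hp0 : 0 ≤ p := hGpos v
  have hune : u ≠ 0 := by
    intro h; rw [h] at hu_unit; simp at hu_unit
  have hgpos : 0 < g := by
    have := hG_pd.dotProduct_mulVec_pos hune
    rwa [star_trivial, ← hg_def] at this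
  rw [hw₁A]
  clear_value α v m q p a g
  -- pure arithmetic from here
  have hm_eq : m = 1 - α ^ 2 := by linarith [hF1]
  have hμm : μ₁ * m = μ₁ - μ₁ * α ^ 2 := by rw [hm_eq]; ring
  have hμ₁g : μ₁ * g ≤ 1 := by
    have hgexp : μ₁ * g = α ^ 2 + μ₁ * p := by
      rw [hF3]; field_simp
    have c0 : 0 ≤ (μ₂ - μ₁) * p := mul_nonneg (by linarith) hp0
    have c1 : (μ₂ - μ₁) * p = μ₂ * p - μ₁ * p := by ring
    linarith
  have hF1sq : (α ^ 2 + m) ^ 2 = 1 := by rw [hF1]; norm_num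
  have key1 : 2 * μ₁ * m ≤ μ₁ ^ 2 * p + q := by
    rcases eq_or_lt_of_le hq0 with h|h
    · have hm2 : m ^ 2 = 0 := le_antisymm (by rw [← h] at hF4; linarith [hF4]) (sq_nonneg m)
      have hmz : m = 0 := by
        have := pow_eq_zero_iff (n := 2) (by norm_num) |>.mp hm2
        exact this
      rw [hmz, ← h]
      have : 0 ≤ μ₁ ^ 2 * p := mul_nonneg (sq_nonneg μ₁) hp0
      linarith
    · by_contra hc
      push_neg at hc
      have c1 : 0 ≤ μ₁ ^ 2 * (q * p - m ^ 2) := mul_nonneg (sq_nonneg μ₁) (by linarith)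
      have c2 := sq_nonneg (q - μ₁ * m)
      have c3 : q * (μ₁ ^ 2 * p + q - 2 * μ₁ * m) = μ₁ ^ 2 * (q * p - m ^ 2) + (q - μ₁ * m) ^ 2 := by
        ring
      have c5 : q * (μ₁ ^ 2 * p + q - 2 * μ₁ * m) < 0 :=
        mul_neg_of_pos_of_neg h (by linarith)
      linarith
  have hexpand : μ₁ * (a * g) = μ₁ * α ^ 4 + μ₁ ^ 2 * α ^ 2 * p + α ^ 2 * q + μ₁ * (q * p) := by
    rw [hF2, hF3]; field_simp; ring
  have hag1 : 1 ≤ a * g := by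
    have cX : 0 ≤ α ^ 2 * (μ₁ ^ 2 * p + q - 2 * μ₁ * m) :=
      mul_nonneg (sq_nonneg α) (by linarith)
    have cY : 0 ≤ μ₁ * (q * p - m ^ 2) := mul_nonneg hμ₁pos.le (by linarith [hF4])
    have c5 : μ₁ * (a * g) = μ₁ * ((α ^ 2 + m) ^ 2)
        + α ^ 2 * (μ₁ ^ 2 * p + q - 2 * μ₁ * m) + μ₁ * (q * p - m ^ 2) := by
      rw [hexpand]; ring
    have c6 : μ₁ * 1 ≤ μ₁ * (a * g) := by
      rw [c5, hF1sq]; linarith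
    exact le_of_mul_le_mul_left c6 hμ₁pos
  have hgap0 : 0 ≤ a - 1 / g := by
    rw [sub_nonneg, div_le_iff₀ hgpos]
    linarith
  have hs2 : s ^ 2 < 1 := pow_lt_one₀ hs0 hs1 two_ne_zero
  have hCLpos : 0 < CL := by
    have h2 : 0 < μ₂ / ((μ₂ - μ₁) * (1 - s ^ 2)) :=
      div_pos hμ₂pos (mul_pos (by linarith) (by linarith))
    linarith
  rcases le_or_gt a μ₁ with hle|hlt
  · have : 0 ≤ CL * (a - 1 / g) := mul_nonneg hCLpos.le hgap0
    linarith
  · have hm1 : m < 1 := by linarith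
    have hL : 0 < q - μ₁ * m := by
      have : a - μ₁ = q - μ₁ * m := by rw [hF2]; linarith [hμm]
      linarith
    have hqpos : 0 < q := by linarith [mul_nonneg hμ₁pos.le hm0]
    have hstepA : μ₁ * (a * g - 1) ≤ a - 1 / g := by
      have hgap_eq : a - 1 / g = (a * g - 1) / g := by field_simp
      rw [hgap_eq, le_div_iff₀ hgpos]
      have c : (a * g - 1) * (1 - μ₁ * g) = (a * g - 1) - μ₁ * (a * g - 1) * g := by ring
      have c2 : 0 ≤ (a * g - 1) * (1 - μ₁ * g) :=
        mul_nonneg (by linarith) (by linarith)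
      linarith
    have hid : q * (μ₁ * (a * g - 1)) - α ^ 2 * (q - μ₁ * (1 - α ^ 2)) ^ 2
        = (q * p - (1 - α ^ 2) ^ 2) * (α ^ 2 * μ₁ ^ 2 + μ₁ * q) := by
      rw [hF2, hF3]; field_simp; ring
    have hstepB : (1 - m) * (q - μ₁ * m) ^ 2 ≤ q * (μ₁ * (a * g - 1)) := by
      have h1 : 0 ≤ (q * p - (1 - α ^ 2) ^ 2) * (α ^ 2 * μ₁ ^ 2 + μ₁ * q) := by
        apply mul_nonneg
        · rw [← hm_eq]; linarith [hF4]
        · have := mul_nonneg (sq_nonneg α) (sq_nonneg μ₁)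
          have := mul_nonneg hμ₁pos.le hq0
          linarith
      have h2 : (1 - m) * (q - μ₁ * m) ^ 2 = α ^ 2 * (q - μ₁ * (1 - α ^ 2)) ^ 2 := by
        rw [hm_eq]; ring
      linarith [hid, h1, h2.le, h2.ge]
    have hCL2 : μ₂ / ((μ₂ - μ₁) * (1 - m)) ≤ CL := by
      have hc : 0 < (μ₂ - μ₁) * (1 - s ^ 2) := mul_pos (by linarith) (by linarith)
      have hdiv : μ₂ / ((μ₂ - μ₁) * (1 - m)) ≤ μ₂ / ((μ₂ - μ₁) * (1 - s ^ 2)) :=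
        div_le_div_of_nonneg_left hμ₂pos.le hc
          (mul_le_mul_of_nonneg_left (by linarith) (by linarith))
      linarith
    have hμ₂L : (μ₂ - μ₁) * q ≤ μ₂ * (q - μ₁ * m) := by
      have c : μ₂ * (q - μ₁ * m) - (μ₂ - μ₁) * q = μ₁ * (q - μ₂ * m) := by ring
      have c2 : 0 ≤ μ₁ * (q - μ₂ * m) := mul_nonneg hμ₁pos.le (by linarith [hF5])
      linarith
    have hCL3 : μ₂ ≤ CL * ((μ₂ - μ₁) * (1 - m)) := by
      have hd2 : 0 < (μ₂ - μ₁) * (1 - m) := mul_pos (by linarith) (by linarith)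
      exact (div_le_iff₀ hd2).mp hCL2
    have hqle : q ≤ CL * ((1 - m) * (q - μ₁ * m)) := by
      have hLpos := hL
      have h3 : μ₂ * (q - μ₁ * m) ≤ CL * ((μ₂ - μ₁) * (1 - m)) * (q - μ₁ * m) :=
        mul_le_mul_of_nonneg_right hCL3 hL.le
      have h4 : (μ₂ - μ₁) * q ≤ CL * ((μ₂ - μ₁) * (1 - m)) * (q - μ₁ * m) := by
        linarith [hμ₂L]
      have h5 : CL * ((μ₂ - μ₁) * (1 - m)) * (q - μ₁ * m)
          = (μ₂ - μ₁) * (CL * ((1 - m) * (q - μ₁ * m))) := by ring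
      have h6 : (μ₂ - μ₁) * q ≤ (μ₂ - μ₁) * (CL * ((1 - m) * (q - μ₁ * m))) := by linarith
      exact le_of_mul_le_mul_left h6 (by linarith)
    -- final combination
    have hE0 := hgap0
    have hqE : (1 - m) * (q - μ₁ * m) ^ 2 ≤ q * (a - 1 / g) := by
      have c := mul_le_mul_of_nonneg_left hstepA hq0
      linarith
    have hfin : q - μ₁ * m ≤ CL * (a - 1 / g) := by
      have d1 : q * (a - 1 / g) ≤ CL * ((1 - m) * (q - μ₁ * m)) * (a - 1 / g) :=
        mul_le_mul_of_nonneg_right hqle hE0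
      have d2 : CL * ((1 - m) * (q - μ₁ * m)) * (a - 1 / g)
          = ((1 - m) * (q - μ₁ * m)) * (CL * (a - 1 / g)) := by ring
      have d3 : (1 - m) * (q - μ₁ * m) ^ 2 = ((1 - m) * (q - μ₁ * m)) * (q - μ₁ * m) := by ring
      have d4 : ((1 - m) * (q - μ₁ * m)) * (q - μ₁ * m)
          ≤ ((1 - m) * (q - μ₁ * m)) * (CL * (a - 1 / g)) := by linarith
      exact le_of_mul_le_mul_left d4 (mul_pos (by linarith) hL)
    have haμ : a - μ₁ = q - μ₁ * m := by rw [hF2]; linarith [hμm]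
    linarith
end

section
/- For u, v ∈ H⁰¹(Ω) ∩ L^∞(Ω) and the Gross–Pitaevskii energy E(w) = ∫_Ω |∇w|² + V|w|² + (β/2)|w|⁴ with the adaptive bilinear form (z,w)_{a_u} = ∫_Ω ∇z·∇w + Vzw + β u² z w, one has the identity E(u) - E(v) - ((u,u)_{a_u} - (v,v)_{a_u}) = -(β/2)∫_Ω (u² - v²)² ≤ 0; in particular E(u) - E(v) ≤ (u,u)_{a_u} - (v,v)_{a_u} whenever β ≥ 0. -/
open MeasureTheory

/-- Key identity for the Gross–Pitaevskii energy and the adaptive bilinear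
form: `gu, gv` denote `|∇u|²`, `|∇v|²`, so
`E(u) = ∫ gu + ∫ V u² + (β/2) ∫ u⁴` and `a_u(z,z) = ∫ gz + ∫ V z² + β ∫ u² z²`.
Then `E(u) - E(v) - ((u,u)_{a_u} - (v,v)_{a_u}) = -(β/2) ∫ (u² - v²)² ≤ 0`. -/
theorem stmt_12 {Ω : Type*} [MeasurableSpace Ω] (μ : Measure Ω)
    (u v V gu gv : Ω → ℝ) (β : ℝ) (hβ : 0 ≤ β)
    (hgu : Integrable gu μ) (hgv : Integrable gv μ)
    (hVu : Integrable (fun x => V x * u x ^ 2) μ)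
    (hVv : Integrable (fun x => V x * v x ^ 2) μ)
    (hu4 : Integrable (fun x => u x ^ 4) μ)
    (hv4 : Integrable (fun x => v x ^ 4) μ)
    (huv : Integrable (fun x => u x ^ 2 * v x ^ 2) μ) :
    ((∫ x, gu x ∂μ + ∫ x, V x * u x ^ 2 ∂μ + β / 2 * ∫ x, u x ^ 4 ∂μ) -
        (∫ x, gv x ∂μ + ∫ x, V x * v x ^ 2 ∂μ + β / 2 * ∫ x, v x ^ 4 ∂μ)) -
      ((∫ x, gu x ∂μ + ∫ x, V x * u x ^ 2 ∂μ + β * ∫ x, u x ^ 2 * u x ^ 2 ∂μ) -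
        (∫ x, gv x ∂μ + ∫ x, V x * v x ^ 2 ∂μ + β * ∫ x, u x ^ 2 * v x ^ 2 ∂μ)) =
      -(β / 2) * ∫ x, (u x ^ 2 - v x ^ 2) ^ 2 ∂μ ∧
    -(β / 2) * ∫ x, (u x ^ 2 - v x ^ 2) ^ 2 ∂μ ≤ 0 := by
  have hsq : (∫ x, (u x ^ 2 - v x ^ 2) ^ 2 ∂μ) =
      (∫ x, u x ^ 4 ∂μ) - 2 * (∫ x, u x ^ 2 * v x ^ 2 ∂μ) + (∫ x, v x ^ 4 ∂μ) := by
    have h1 : (∫ x, (u x ^ 2 - v x ^ 2) ^ 2 ∂μ) =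
        ∫ x, (u x ^ 4 - 2 * (u x ^ 2 * v x ^ 2) + v x ^ 4) ∂μ := by
      congr 1; ext x; ring
    have hA : Integrable (fun x => u x ^ 4 - 2 * (u x ^ 2 * v x ^ 2)) μ :=
      hu4.sub (huv.const_mul 2)
    rw [h1, integral_add hA hv4, integral_sub hu4 (huv.const_mul 2), integral_const_mul]
  have huu : (∫ x, u x ^ 2 * u x ^ 2 ∂μ) = ∫ x, u x ^ 4 ∂μ := by
    congr 1; ext x; ring
  constructor
  · rw [hsq, huu]; ring
  · have hpos : 0 ≤ ∫ x, (u x ^ 2 - v x ^ 2) ^ 2 ∂μ :=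
      integral_nonneg fun x => sq_nonneg _
    nlinarith [hpos, hβ]
end

section
/- For entrywise positive vectors v, w ∈ ℝ^N and a symmetric matrix B with nonpositive off-diagonal entries, the discrete Picone inequality holds: wᵀ B (v^{[2]}/w) ≤ vᵀ B v, where (v^{[2]}/w)(i) = v(i)²/w(i). -/
open Matrix

/-- Discrete Picone inequality: for entrywise positive vectors `v, w` and a
symmetric matrix `B` with nonpositive off-diagonal entries,
`wᵀ B (v²/w) ≤ vᵀ B v`. -/
theorem stmt_19 {N : ℕ} (B : Matrix (Fin N) (Fin N) ℝ)
    (hB_symm : B.IsSymm)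
    (hoff : ∀ i j, i ≠ j → B i j ≤ 0)
    (v w : Fin N → ℝ)
    (hv_pos : ∀ i, 0 < v i) (hw_pos : ∀ i, 0 < w i) :
    w ⬝ᵥ B.mulVec (fun i => v i ^ 2 / w i) ≤ v ⬝ᵥ B.mulVec v := by
  have key : ∀ i j, B i j * (v i * v j - w i * (v j ^ 2 / w j))
      + B j i * (v j * v i - w j * (v i ^ 2 / w i)) ≥ 0 := by
    intro i j
    by_cases h : i = j
    · subst h
      have : w i * (v i ^ 2 / w i) = v i ^ 2 := by
        rw [mul_comm, div_mul_eq_mul_div, mul_div_assoc, div_self (ne_of_gt (hw_pos i)), mul_one]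
      rw [this]; ring_nf; nlinarith [sq_nonneg (v i)]
    · have hB : B i j ≤ 0 := hoff i j h
      have hBji : B j i = B i j := by
        have := hB_symm; rw [Matrix.IsSymm] at this
        have := congrFun (congrFun this i) j
        simpa [Matrix.transpose_apply] using this
      rw [hBji]
      have hwi := hw_pos i
      have hwj := hw_pos j
      have hbr : v i * v j - w i * (v j ^ 2 / w j)
          + (v j * v i - w j * (v i ^ 2 / w i)) ≤ 0 := by
        have hc : (0:ℝ) < w i * w j := mul_pos (hw_pos i) (hw_pos j)
        have heq : (v i * v j - w i * (v j ^ 2 / w j)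
            + (v j * v i - w j * (v i ^ 2 / w i))) * (w i * w j)
            = -(w i * v j - w j * v i) ^ 2 := by
          field_simp
          ring
        have hle : (v i * v j - w i * (v j ^ 2 / w j)
            + (v j * v i - w j * (v i ^ 2 / w i))) * (w i * w j) ≤ 0 := by
          rw [heq]; exact neg_nonpos.mpr (sq_nonneg _)
        exact le_of_mul_le_mul_right (hle.trans_eq (zero_mul (w i * w j)).symm) hc
      nlinarith
  have expand : v ⬝ᵥ B.mulVec v - w ⬝ᵥ B.mulVec (fun i => v i ^ 2 / w i)
      = ∑ i, ∑ j, B i j * (v i * v j - w i * (v j ^ 2 / w j)) := by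
    simp only [dotProduct, mulVec, dotProduct, Finset.mul_sum, mul_sub,
      ← Finset.sum_sub_distrib]
    refine Finset.sum_congr rfl fun i _ => Finset.sum_congr rfl fun j _ => by ring
  have sum_nonneg : 0 ≤ ∑ i, ∑ j, B i j * (v i * v j - w i * (v j ^ 2 / w j)) := by
    have this : (2:ℝ) * ∑ i, ∑ j, B i j * (v i * v j - w i * (v j ^ 2 / w j))
        = ∑ i, ∑ j, (B i j * (v i * v j - w i * (v j ^ 2 / w j))
          + B j i * (v j * v i - w j * (v i ^ 2 / w i))) := by
      rw [two_mul]
      nth_rewrite 2 [Finset.sum_comm]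
      rw [← Finset.sum_add_distrib]
      refine Finset.sum_congr rfl fun i _ => ?_
      rw [← Finset.sum_add_distrib]
    have h2 : 0 ≤ ∑ i, ∑ j, (B i j * (v i * v j - w i * (v j ^ 2 / w j))
          + B j i * (v j * v i - w j * (v i ^ 2 / w i))) :=
      Finset.sum_nonneg fun i _ => Finset.sum_nonneg fun j _ => key i j
    linarith [this ▸ h2]
  linarith [expand ▸ sum_nonneg]
end
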